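/- arXiv:2305.05063 — 2 statements merged into one kernel-verified Lean document; each statement's English description precedes it below -/
import Mathlib

section
/- With A as in the previous construction (A = ∑_{i≤m} q^{−m}(1−q^{−N+2m}) e_ii + ∑_{m<i≤N−m} q^{−m} e_ii + skew-diagonal entries y_i e_{i,i'} for i ≤ m or i ≥ N+1−m with y_i y_{i'} = q^{−N}), the matrix A satisfies the quadratic minimal-polynomial identity (A + q^{−(N−m)})(A − q^{−m}) = 0. -/
open Matrix

/-- The quantum point of type T2:
`A = ∑_{i≤m} q^{−m}(1−q^{−N+2m}) e_ii + ∑_{m<i≤N−m} q^{−m} e_ii + ∑_{i≤m ∨ i≥N+1−m} y_i e_{i,i'}`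
(0-based indices, `i' = N+1−i` in 1-based indexing). -/
noncomputable def Amat (N m : ℕ) (q : ℂ) (y : Fin N → ℂ) : Matrix (Fin N) (Fin N) ℂ :=
  Matrix.of fun i j =>
    (if i = j then
        (if (i : ℕ) < m then q ^ (-(m : ℤ)) * (1 - q ^ (2 * (m : ℤ) - (N : ℤ)))
         else if (i : ℕ) + m < N then q ^ (-(m : ℤ)) else 0)
      else 0) +
    (if ((i : ℕ) < m ∨ N ≤ (i : ℕ) + m) ∧ (i : ℕ) + (j : ℕ) + 1 = N then y i else 0)

/-!
Write `A = D + E J` with `D`, `E` diagonal and `J` the permutation matrix of the reversal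
`i ↦ i'`. Then `A` is a direct sum of the `2 × 2` blocks on `{i, i'}` for `i ≤ m`, each with
trace `q^{-m} - q^{-(N-m)}` and determinant `-y_i y_{i'} = -q^{-N}`, and of the scalar
`q^{-m}` on the middle indices; by Cayley–Hamilton every block is killed by
`(t + q^{-(N-m)})(t - q^{-m})`. Concretely, products of matrices of the shape `D + E J` again
have this shape, so the identity reduces to two scalar identities for each index `i`.
-/

namespace Matrix

variable {n R : Type*} [DecidableEq n] [Fintype n]

section Semiring

variable [Semiring R]

lemma permMatrix_mul_diagonal (σ : Equiv.Perm n) (f : n → R) :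
    σ.permMatrix R * diagonal f = diagonal (f ∘ σ) * σ.permMatrix R := by
  ext i j
  rw [PEquiv.toMatrix_toPEquiv_mul, diagonal_mul]
  simp [PEquiv.toMatrix_apply, diagonal_apply, Equiv.toPEquiv_apply]

lemma permMatrix_mul_self_of_involutive {σ : Equiv.Perm n} (hσ : Function.Involutive σ) :
    σ.permMatrix R * σ.permMatrix R = 1 := by
  rw [← permMatrix_mul, ← permMatrix_one]
  congr 1
  ext i
  exact hσ i

lemma diagonal_add_diagonal_mul_permMatrix_mul {σ : Equiv.Perm n} (hσ : Function.Involutive σ)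
    (d₁ e₁ d₂ e₂ : n → R) :
    (diagonal d₁ + diagonal e₁ * σ.permMatrix R) * (diagonal d₂ + diagonal e₂ * σ.permMatrix R) =
      diagonal (d₁ * d₂ + e₁ * (e₂ ∘ σ)) +
        diagonal (d₁ * e₂ + e₁ * (d₂ ∘ σ)) * σ.permMatrix R := by
  have hmul (f g : n → R) : diagonal f * diagonal g = diagonal (f * g) :=
    diagonal_mul_diagonal f g
  have hadd (f g : n → R) : diagonal (f + g) = diagonal f + diagonal g :=
    (diagonal_add f g).symm
  have hcomm (f : n → R) : diagonal e₁ * σ.permMatrix R * diagonal f =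
      diagonal (e₁ * (f ∘ σ)) * σ.permMatrix R := by
    rw [Matrix.mul_assoc, permMatrix_mul_diagonal, ← Matrix.mul_assoc, hmul]
  rw [add_mul, mul_add, mul_add, ← Matrix.mul_assoc, ← Matrix.mul_assoc, hmul, hmul, hcomm,
    hcomm, Matrix.mul_assoc _ (σ.permMatrix R), permMatrix_mul_self_of_involutive hσ,
    Matrix.mul_one, hadd, hadd, add_mul]
  abel

end Semiring

lemma diagonal_add_diagonal_mul_permMatrix_annihilated [CommRing R] {σ : Equiv.Perm n}
    (hσ : Function.Involutive σ) {a b : R} {d e : n → R}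
    (hdiag : ∀ i, (d i + a) * (d i - b) + e i * e (σ i) = 0)
    (hskew : ∀ i, e i * (d i + d (σ i) + a - b) = 0) :
    (diagonal d + diagonal e * σ.permMatrix R + a • 1) *
      (diagonal d + diagonal e * σ.permMatrix R - b • 1) = 0 := by
  rw [smul_one_eq_diagonal, smul_one_eq_diagonal, add_right_comm, add_sub_right_comm,
    diagonal_add, diagonal_sub, diagonal_add_diagonal_mul_permMatrix_mul hσ]
  have hdiag' : (fun i => d i + a) * (fun i => d i - b) + e * (e ∘ σ) = 0 := funext hdiag
  have hskew' : (fun i => d i + a) * e + e * ((fun i => d i - b) ∘ σ) = 0 := by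
    funext i
    simp only [Pi.add_apply, Pi.mul_apply, Function.comp_apply, Pi.zero_apply]
    linear_combination hskew i
  rw [hdiag', hskew', diagonal_zero', zero_mul, add_zero]

end Matrix

section Amat

variable {N m : ℕ} {q : ℂ} {y : Fin N → ℂ} {i : Fin N}

noncomputable def amatDiag (N m : ℕ) (q : ℂ) (i : Fin N) : ℂ :=
  if (i : ℕ) < m then q ^ (-(m : ℤ)) * (1 - q ^ (2 * (m : ℤ) - (N : ℤ)))
  else if (i : ℕ) + m < N then q ^ (-(m : ℤ)) else 0

def amatSkew (N m : ℕ) (y : Fin N → ℂ) (i : Fin N) : ℂ :=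
  if (i : ℕ) < m ∨ N ≤ (i : ℕ) + m then y i else 0

lemma Amat_eq_diagonal_add_diagonal_mul_permMatrix (N m : ℕ) (q : ℂ) (y : Fin N → ℂ) :
    Amat N m q y =
      diagonal (amatDiag N m q) + diagonal (amatSkew N m y) * Fin.revPerm.permMatrix ℂ := by
  ext i j
  have hrev : Fin.rev i = j ↔ (i : ℕ) + j + 1 = N := by
    rw [Fin.ext_iff, Fin.val_rev]
    omega
  by_cases hij : (i : ℕ) + j + 1 = N <;>
    simp [Amat, amatDiag, amatSkew, diagonal_apply, PEquiv.toMatrix_apply, hrev, hij]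

lemma amatDiag_of_lt (hq : q ≠ 0) (hi : (i : ℕ) < m) :
    amatDiag N m q i = q ^ (-(m : ℤ)) - q ^ (-((N : ℤ) - (m : ℤ))) := by
  rw [amatDiag, if_pos hi, mul_sub, mul_one, ← zpow_add₀ hq]
  ring_nf

lemma amatDiag_rev_of_lt (hm2 : 2 * m ≤ N) (hi : (i : ℕ) < m) : amatDiag N m q i.rev = 0 := by
  rw [amatDiag, if_neg, if_neg] <;> rw [Fin.val_rev] <;> omega

lemma amatDiag_of_le_of_lt (hi : m ≤ (i : ℕ)) (hi' : (i : ℕ) + m < N) :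
    amatDiag N m q i = q ^ (-(m : ℤ)) := by
  rw [amatDiag, if_neg (by omega), if_pos hi']

lemma amatSkew_of_lt (hi : (i : ℕ) < m) : amatSkew N m y i = y i :=
  if_pos (Or.inl hi)

lemma amatSkew_rev_of_lt (hi : (i : ℕ) < m) : amatSkew N m y i.rev = y i.rev :=
  if_pos (Or.inr (by rw [Fin.val_rev]; omega))

lemma amatSkew_of_le_of_lt (hi : m ≤ (i : ℕ)) (hi' : (i : ℕ) + m < N) : amatSkew N m y i = 0 :=
  if_neg (by omega)

lemma amat_block_annihilated (hq : q ≠ 0) (hm2 : 2 * m ≤ N)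
    (hy : ∀ i j : Fin N, (i : ℕ) < m → (i : ℕ) + (j : ℕ) + 1 = N →
      y i * y j = q ^ (-(N : ℤ))) (i : Fin N) :
    (amatDiag N m q i + q ^ (-((N : ℤ) - (m : ℤ)))) * (amatDiag N m q i - q ^ (-(m : ℤ))) +
        amatSkew N m y i * amatSkew N m y i.rev = 0 ∧
      amatSkew N m y i * (amatDiag N m q i + amatDiag N m q i.rev +
        q ^ (-((N : ℤ) - (m : ℤ))) - q ^ (-(m : ℤ))) = 0 := by
  have hprod : q ^ (-(m : ℤ)) * q ^ (-((N : ℤ) - (m : ℤ))) = q ^ (-(N : ℤ)) := by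
    rw [← zpow_add₀ hq]
    ring_nf
  have hyrev {j : Fin N} (hj : (j : ℕ) < m) : y j * y j.rev = q ^ (-(N : ℤ)) :=
    hy j j.rev hj (by rw [Fin.val_rev]; omega)
  rcases lt_or_ge (i : ℕ) m with hi | hi
  · rw [amatDiag_of_lt hq hi, amatDiag_rev_of_lt hm2 hi, amatSkew_of_lt hi,
      amatSkew_rev_of_lt hi]
    exact ⟨by linear_combination hyrev hi - hprod, by ring⟩
  rcases lt_or_ge ((i : ℕ) + m) N with hi' | hi'
  · rw [amatDiag_of_le_of_lt hi hi', amatSkew_of_le_of_lt hi hi']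
    exact ⟨by ring, by ring⟩
  obtain ⟨j, rfl⟩ : ∃ j, i = Fin.rev j := ⟨i.rev, (Fin.rev_rev i).symm⟩
  have hj : (j : ℕ) < m := by
    rw [Fin.val_rev] at hi'
    omega
  rw [Fin.rev_rev, amatDiag_of_lt hq hj, amatDiag_rev_of_lt hm2 hj, amatSkew_of_lt hj,
    amatSkew_rev_of_lt hj]
  exact ⟨by linear_combination hyrev hj - hprod, by ring⟩

end Amat

theorem minimal_polynomial_T2_general (N m : ℕ) (q : ℂ) (hq : q ≠ 0)
    (hm2 : 2 * m ≤ N) (y : Fin N → ℂ)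
    (hy : ∀ i j : Fin N, (i : ℕ) < m → (i : ℕ) + (j : ℕ) + 1 = N →
      y i * y j = q ^ (-(N : ℤ))) :
    (Amat N m q y + q ^ (-((N : ℤ) - (m : ℤ))) • (1 : Matrix (Fin N) (Fin N) ℂ)) *
      (Amat N m q y - q ^ (-(m : ℤ)) • (1 : Matrix (Fin N) (Fin N) ℂ)) = 0 := by
  rw [Amat_eq_diagonal_add_diagonal_mul_permMatrix]
  exact diagonal_add_diagonal_mul_permMatrix_annihilated Fin.rev_involutive
    (fun i => (amat_block_annihilated hq hm2 hy i).1)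
    (fun i => (amat_block_annihilated hq hm2 hy i).2)

/-- The minimal polynomial identity `(A + q^{−(N−m)})(A − q^{−m}) = 0`. -/
theorem minimal_polynomial_T2 (N m : ℕ) (q : ℂ) (hq : q ≠ 0)
    (hq1 : ∀ k : ℕ, k ≠ 0 → q ^ k ≠ 1)
    (hm : 1 ≤ m) (hm2 : 2 * m ≤ N) (y : Fin N → ℂ)
    (hy : ∀ i j : Fin N, (i : ℕ) < m → (i : ℕ) + (j : ℕ) + 1 = N →
      y i * y j = q ^ (-(N : ℤ))) :
    (Amat N m q y + q ^ (-((N : ℤ) - (m : ℤ))) • (1 : Matrix (Fin N) (Fin N) ℂ)) *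
      (Amat N m q y - q ^ (-(m : ℤ)) • (1 : Matrix (Fin N) (Fin N) ℂ)) = 0 :=
  minimal_polynomial_T2_general N m q hq hm2 y hy
end

section
/- Let N be even and define A₀ = ∑_{odd i ≤ N−1} z_i·(e_{i, i'−1} − e_{i+1, i'}) ∈ End(ℂ^N), where i' = N+1−i and z_i z_{i'−1} = −1 for all odd i. Then A₀² = −1. -/
/-!
`A₀` is a weighted permutation matrix: row `a` has its single entry in column `σ a`, where
`σ a = N - 2 - a` for even `a` and `σ a = N - a` for odd `a` (0-based). For even `N` this `σ` is an
involution, and the square of a weighted involutive permutation matrix is diagonal with entries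
`w a * w (σ a)`; here each such product is `z_i z_{N-i} = -1` for an odd `i`.
-/

open Matrix

/-- The classical point `A₀ = ∑_{odd i ≤ N−1} z_i (e_{i,i'−1} − e_{i+1,i'})`, `i' = N+1−i`,
written with 0-based row index `a`: for `a` even the 1-based row is `i = a+1` and the entry
`z_{a+1}` sits in the 0-based column `b` with `a + b + 2 = N`; for `a` odd the 1-based row is
`i+1 = a+1` (so `i = a`) and the entry `−z_a` sits in the 0-based column `b` with `a + b = N`. -/
noncomputable def A0mat (N : ℕ) (z : ℕ → ℂ) : Matrix (Fin N) (Fin N) ℂ :=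
  Matrix.of fun a b =>
    if (a : ℕ) % 2 = 0 ∧ (a : ℕ) + (b : ℕ) + 2 = N then z ((a : ℕ) + 1)
    else if (a : ℕ) % 2 = 1 ∧ (a : ℕ) + (b : ℕ) = N then -z (a : ℕ)
    else 0

/-!
`A₀` is a weighted permutation matrix: row `a` has its single entry in column `σ a`, where
`σ a = N - 2 - a` for even `a` and `σ a = N - a` for odd `a` (0-based). For even `N` this `σ` is an
involution, and the square of a weighted involutive permutation matrix is diagonal with entries
`w a * w (σ a)`; here each such product is `z_i z_{N-i} = -1` for an odd `i`.
-/

theorem Matrix.of_ite_mul_self_eq_diagonal {n R : Type*} [Fintype n] [DecidableEq n] [NonAssocSemiring R]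
    {σ : n → n} (hσ : Function.Involutive σ) (w : n → R) :
    (of fun a b => if b = σ a then w a else 0 : Matrix n n R) *
        of (fun a b => if b = σ a then w a else 0) =
      diagonal fun a => w a * w (σ a) := by
  ext a c
  rw [mul_apply, Finset.sum_eq_single_of_mem (σ a) (Finset.mem_univ _) fun b _ hb => by
    simp only [of_apply, if_neg hb, zero_mul]]
  simp only [of_apply, if_pos, hσ a, diagonal_apply, eq_comm (a := c), mul_ite, mul_zero]

namespace T4

def partner (N : ℕ) (a : Fin N) : Fin N :=
  ⟨if (a : ℕ) % 2 = 0 then N - 2 - a else N - a, by split_ifs <;> omega⟩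

def weight (z : ℕ → ℂ) (a : ℕ) : ℂ :=
  if a % 2 = 0 then z (a + 1) else -z a

theorem partner_involutive {N : ℕ} (hN : Even N) : Function.Involutive (partner N) := by
  obtain ⟨k, rfl⟩ := hN
  intro a
  ext
  simp only [partner]
  split_ifs <;> omega

theorem A0mat_eq {N : ℕ} (hN : Even N) (z : ℕ → ℂ) :
    A0mat N z = of fun a b => if b = partner N a then weight z a else 0 := by
  obtain ⟨k, rfl⟩ := hN
  ext a b
  have ha := a.isLt
  simp only [A0mat, partner, weight, of_apply, Fin.ext_iff]
  split_ifs <;> first | rfl | omega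

theorem weight_mul_weight_partner {N : ℕ} (hN : Even N) {z : ℕ → ℂ}
    (hz : ∀ i j : ℕ, i % 2 = 1 → i + j = N → z i * z j = -1) (a : Fin N) :
    weight z a * weight z (partner N a) = -1 := by
  obtain ⟨k, rfl⟩ := hN
  have ha := a.isLt
  simp only [weight, partner]
  split_ifs
  · exact hz _ _ (by omega) (by omega)
  · omega
  · omega
  · rw [neg_mul_neg]
    exact hz _ _ (by omega) (by omega)

end T4

/-- For even `N` and `z_i z_{N−i} = −1` (odd `i`), the classical point of the `O(N)` class
of type T4 satisfies `A₀² = −1`. -/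
theorem classical_point_T4_orthogonal (N : ℕ) (hN : Even N) (z : ℕ → ℂ)
    (hz : ∀ i j : ℕ, i % 2 = 1 → i + j = N → z i * z j = -1) :
    A0mat N z * A0mat N z = -1 := by
  rw [T4.A0mat_eq hN, of_ite_mul_self_eq_diagonal (T4.partner_involutive hN)]
  simp only [T4.weight_mul_weight_partner hN hz, ← diagonal_one, ← diagonal_neg]
end
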